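/- Uniqueness for discrete projection tomography: Let f, g ∈ O_n and let T be any one of the three families of directions {(1,α_l,β_l) : l = 1,…,n}, {(α_l,1,β_l) : l = 1,…,n}, {(α_l,β_l,1) : l = 1,…,n}, where the family (α_l,β_l) satisfies the diversity condition. If there is a constant θ0 ∈ ℝ such that g_t(m) = exp(i·θ0)·f_t(m) for every t ∈ T and every m ∈ Z_p², then g = exp(i·θ0)·f. -/

import Mathlib

/-!
Put `h = g - e^{iθ₀} f`; it is an object all of whose projections along the family vanish, and
after permuting coordinates the family may be taken to be `(1, α_l, β_l)`. By the Fourier slice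
theorem, the 2D DFT of the projection along `(1, α_l, β_l)` at `w ∈ Z_p²` is
`Σ_{i ∈ Z_n} Ĥ_i(w) z_l^i`, where `Ĥ_i` is the 2D DFT of the slice `h(i, ·, ·)` and
`z_l = e_p(α_l w₁ + β_l w₂)`. For `w ≠ 0` the diversity condition makes the `n` nodes `z_l`
distinct, so this Laurent polynomial with at most `n` coefficients is zero: `Ĥ_i(w) = 0`.
By Fourier inversion each slice is then constant on `Z_p²`, and it vanishes on
`Z_p² \ Z_n² ≠ ∅` (as `p = 2n - 1 > n`), so it is zero.
-/

open Complex MeasureTheory ProbabilityTheory BigOperators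

noncomputable section

namespace Tomo3D

/-- `Z_m`: the integers in `[-(m-1)/2, (m-1)/2]` (for odd `m`). -/
def Zf (m : ℕ) : Finset ℤ :=
  Finset.Icc (-(((m : ℤ) - 1) / 2)) (((m : ℤ) - 1) / 2)

/-- `Z_m²`. -/
def Zf2 (m : ℕ) : Finset (ℤ × ℤ) := Zf m ×ˢ Zf m

/-- The `p`-periodic Dirichlet kernel `D_p`. -/
def Dk (p : ℕ) (t : ℝ) : ℂ :=
  (p : ℂ)⁻¹ * ∑ l ∈ Zf p,
    Complex.exp (2 * (Real.pi : ℂ) * Complex.I * (l : ℂ) * (t : ℂ) / (p : ℂ))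

/-- The class `O_n`: objects supported in `Z_n³`. -/
def IsObj (n : ℕ) (f : ℤ → ℤ → ℤ → ℂ) : Prop :=
  ∀ i j k : ℤ, i ∉ Zf n ∨ j ∉ Zf n ∨ k ∉ Zf n → f i j k = 0

/-- Continuous interpolation `f̃` of an object. -/
def interp (n : ℕ) (f : ℤ → ℤ → ℤ → ℂ) (x y z : ℝ) : ℂ :=
  ∑ i ∈ Zf n, ∑ j ∈ Zf n, ∑ k ∈ Zf n,
    f i j k * Dk (2 * n - 1) (x - (i : ℝ)) * Dk (2 * n - 1) (y - (j : ℝ)) *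
      Dk (2 * n - 1) (z - (k : ℝ))

/-- Directions `(1,α,β)`, `(α,1,β)`, `(α,β,1)`. -/
inductive Dir
  | dx (α β : ℝ)
  | dy (α β : ℝ)
  | dz (α β : ℝ)

/-- Validity of a direction: the slopes satisfy `|α| < 1`, `|β| < 1`. -/
def Dir.valid : Dir → Prop
  | .dx α β => |α| < 1 ∧ |β| < 1
  | .dy α β => |α| < 1 ∧ |β| < 1
  | .dz α β => |α| < 1 ∧ |β| < 1

/-- The vector in `ℝ³` attached to a direction. -/
def Dir.toVec : Dir → ℝ × ℝ × ℝ
  | .dx α β => (1, α, β)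
  | .dy α β => (α, 1, β)
  | .dz α β => (α, β, 1)

/-- Two directions are parallel if one is a real scalar multiple of the other. -/
def Dir.Parallel (t t' : Dir) : Prop :=
  ∃ c : ℝ, t'.toVec = c • t.toVec ∨ t.toVec = c • t'.toVec

/-- Discrete projection of an object along a direction, regarded as a function on
`Z_{2n-1}²` extended by zero to `ℤ²`. -/
def proj (n : ℕ) (f : ℤ → ℤ → ℤ → ℂ) : Dir → ℤ × ℤ → ℂ
  | .dx α β => fun c =>
      if c ∈ Zf2 (2 * n - 1) then
        ∑ i ∈ Zf n, interp n f (i : ℝ) (α * (i : ℝ) + (c.1 : ℝ)) (β * (i : ℝ) + (c.2 : ℝ))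
      else 0
  | .dy α β => fun c =>
      if c ∈ Zf2 (2 * n - 1) then
        ∑ j ∈ Zf n, interp n f (α * (j : ℝ) + (c.1 : ℝ)) (j : ℝ) (β * (j : ℝ) + (c.2 : ℝ))
      else 0
  | .dz α β => fun c =>
      if c ∈ Zf2 (2 * n - 1) then
        ∑ k ∈ Zf n, interp n f (α * (k : ℝ) + (c.1 : ℝ)) (β * (k : ℝ) + (c.2 : ℝ)) (k : ℝ)
      else 0

/-- 3D discrete Fourier transform of an object (defined for all real frequencies). -/
def ft3 (n : ℕ) (f : ℤ → ℤ → ℤ → ℂ) (ξ η ζ : ℝ) : ℂ :=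
  ∑ i ∈ Zf n, ∑ j ∈ Zf n, ∑ k ∈ Zf n,
    f i j k *
      Complex.exp (-(2 * (Real.pi : ℂ) * Complex.I) *
        ((ξ : ℂ) * (i : ℂ) + (η : ℂ) * (j : ℂ) + (ζ : ℂ) * (k : ℂ)) /
          (((2 * n - 1 : ℕ) : ℂ)))

/-- 2D discrete Fourier transform of a projection (defined for all real frequencies). -/
def ft2 (n : ℕ) (g : ℤ × ℤ → ℂ) (η ζ : ℝ) : ℂ :=
  ∑ c ∈ Zf2 (2 * n - 1),
    g c *
      Complex.exp (-(2 * (Real.pi : ℂ) * Complex.I) *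
        ((η : ℂ) * (c.1 : ℂ) + (ζ : ℂ) * (c.2 : ℂ)) / (((2 * n - 1 : ℕ) : ℂ)))

/-- Diffraction pattern of `h : Z_p² → ℂ`. -/
def dpat (p : ℕ) (h : ℤ × ℤ → ℂ) (w : ℝ × ℝ) : ℝ :=
  ‖∑ m ∈ Zf2 p,
      h m * Complex.exp (-(2 * (Real.pi : ℂ) * Complex.I) *
        ((m.1 : ℂ) * (w.1 : ℂ) + (m.2 : ℂ) * (w.2 : ℂ)))‖ ^ 2

/-- `h₁` and `h₂` produce the same diffraction pattern (on `[-1/2,1/2]²`). -/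
def SameDP (p : ℕ) (h₁ h₂ : ℤ × ℤ → ℂ) : Prop :=
  ∀ w : ℝ × ℝ, w.1 ∈ Set.Icc (-(1 : ℝ) / 2) (1 / 2) →
    w.2 ∈ Set.Icc (-(1 : ℝ) / 2) (1 / 2) → dpat p h₁ w = dpat p h₂ w

/-- Autocorrelation of `h : ℤ² → ℂ`. -/
def autocorr (h : ℤ × ℤ → ℂ) (m : ℤ × ℤ) : ℂ :=
  ∑' m' : ℤ × ℤ, h (m' + m) * (starRingEnd ℂ) (h m')

/-- The random phase mask `μ(m) = exp(i φ(m))`. -/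
def mask {Ω : Type*} (φ : ℤ × ℤ → Ω → ℝ) (ω : Ω) (m : ℤ × ℤ) : ℂ :=
  Complex.exp (Complex.I * ((φ m ω : ℝ) : ℂ))

/-- The Mask Assumption: the phases `φ(m)`, `m ∈ Z_p²`, are independent real random
variables whose laws have no atoms. -/
def MaskAssumption {Ω : Type*} [MeasurableSpace Ω] (P : Measure Ω) (p : ℕ)
    (φ : ℤ × ℤ → Ω → ℝ) : Prop :=
  (∀ m, Measurable (φ m)) ∧
  iIndepFun (m := fun _ : {m : ℤ × ℤ // m ∈ Zf2 p} => (inferInstance : MeasurableSpace ℝ))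
    (fun m : {m : ℤ × ℤ // m ∈ Zf2 p} => φ m.1) P ∧
  ∀ m ∈ Zf2 p, ∀ r : ℝ, P {ω | φ m ω = r} = 0

/-- The uniform random phase mask: independent phases, uniformly distributed on `[0,2π)`. -/
def UniformMask {Ω : Type*} [MeasurableSpace Ω] (P : Measure Ω) (p : ℕ)
    (φ : ℤ × ℤ → Ω → ℝ) : Prop :=
  (∀ m, Measurable (φ m)) ∧
  iIndepFun (m := fun _ : {m : ℤ × ℤ // m ∈ Zf2 p} => (inferInstance : MeasurableSpace ℝ))
    (fun m : {m : ℤ × ℤ // m ∈ Zf2 p} => φ m.1) P ∧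
  ∀ m ∈ Zf2 p,
    P.map (φ m) = (ENNReal.ofReal (2 * Real.pi))⁻¹ • volume.restrict (Set.Ico 0 (2 * Real.pi))

/-- The representative of `x` modulo `p` lying in `Z_p` (for odd `p`). -/
def zmodRep (p : ℕ) (x : ℤ) : ℤ := (x + ((p : ℤ) - 1) / 2) % (p : ℤ) - ((p : ℤ) - 1) / 2

/-- `p`-periodic extension to `ℤ²` of a function on `Z_p²`. -/
def perExt (p : ℕ) (h : ℤ × ℤ → ℂ) (m : ℤ × ℤ) : ℂ := h (zmodRep p m.1, zmodRep p m.2)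

/-- A function on `ℤ²` is supported on a line. -/
def SuppOnLine (h : ℤ × ℤ → ℂ) : Prop :=
  ∃ a b : ℝ × ℝ, ∀ m : ℤ × ℤ, h m ≠ 0 →
    ∃ s : ℝ, ((m.1 : ℝ), (m.2 : ℝ)) = (a.1 + s * b.1, a.2 + s * b.2)

/-- The diversity condition for a family of slope pairs. -/
def Diversity (n : ℕ) (α β : Fin n → ℝ) : Prop :=
  (∀ l, |α l| < 1 ∧ |β l| < 1) ∧
  ∀ ξη : ℤ × ℤ, ξη ∈ Zf2 (2 * n - 1) → ξη ≠ (0, 0) →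
    ∀ l l' : Fin n, l ≠ l' →
      ¬ ∃ z : ℤ,
        α l * (ξη.1 : ℝ) + β l * (ξη.2 : ℝ) - (α l' * (ξη.1 : ℝ) + β l' * (ξη.2 : ℝ))
          = (z : ℝ) * (((2 * n - 1 : ℕ) : ℝ))

/-- The 3D Itoh condition for `κ`: variation less than `π/κ` between adjacent grid points. -/
def Itoh (n : ℕ) (κ : ℝ) (f : ℤ → ℤ → ℤ → ℂ) : Prop :=
  ∀ i j k i' j' k' : ℤ,
    i ∈ Zf n → j ∈ Zf n → k ∈ Zf n → i' ∈ Zf n → j' ∈ Zf n → k' ∈ Zf n →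
    ((|i - i'| = 1 ∧ j = j' ∧ k = k') ∨ (i = i' ∧ |j - j'| = 1 ∧ k = k') ∨
      (i = i' ∧ j = j' ∧ |k - k'| = 1)) →
    ‖f i j k - f i' j' k'‖ < Real.pi / κ

/-- The common set `L_{t,t'}(f)` for directions `t = (α,β,1)` and `t' = (α',β',1)`. -/
def commonSet (n : ℕ) (f : ℤ → ℤ → ℤ → ℂ) (α β α' β' : ℝ) : Set ((ℝ × ℝ) × (ℝ × ℝ)) :=
  {kk | ft2 n (proj n f (Dir.dz α β)) kk.1.1 kk.1.2
      = ft2 n (proj n f (Dir.dz α' β')) kk.2.1 kk.2.2}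

/-- `k` has a slope (its first component is nonzero) which is not a fraction over `Z_p`. -/
def BadSlope (p : ℕ) (k : ℝ × ℝ) : Prop :=
  k.1 ≠ 0 ∧ ∀ a b : ℤ, a ∈ Zf p → b ∈ Zf p → b ≠ 0 → k.2 / k.1 ≠ (a : ℝ) / (b : ℝ)

/-- Sector condition: every nonzero value of `h` has phase angle in `[a, b]` (mod 2π). -/
def Sector (a b : ℝ) (h : ℤ × ℤ → ℂ) : Prop :=
  ∀ m : ℤ × ℤ, h m ≠ 0 →
    ∃ θ ∈ Set.Icc a b, h m = ((‖h m‖ : ℝ) : ℂ) * Complex.exp (Complex.I * (θ : ℂ))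

open scoped Classical in
/-- Number of points of `Z_p²` where `h` does not vanish. -/
def nnz (p : ℕ) (h : ℤ × ℤ → ℂ) : ℕ := ((Zf2 p).filter fun m => h m ≠ 0).card

def ep (p : ℕ) (x : ℂ) : ℂ := Complex.exp (2 * Real.pi * Complex.I * x / p)

lemma ep_add (p : ℕ) (x y : ℂ) : ep p (x + y) = ep p x * ep p y := by
  rw [ep, ep, ep, ← Complex.exp_add]; ring_nf

lemma ep_zero (p : ℕ) : ep p 0 = 1 := by simp [ep]

lemma ep_ne_zero (p : ℕ) (x : ℂ) : ep p x ≠ 0 := Complex.exp_ne_zero _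

lemma ep_intCast_mul (p : ℕ) (m : ℤ) (x : ℂ) : ep p (m * x) = ep p x ^ m := by
  rw [ep, ep, ← Complex.exp_int_mul]; ring_nf

lemma ep_eq_ep_iff {p : ℕ} (hp : p ≠ 0) (x y : ℂ) :
    ep p x = ep p y ↔ ∃ m : ℤ, x = y + m * p := by
  have hp' : (p : ℂ) ≠ 0 := Nat.cast_ne_zero.2 hp
  rw [ep, ep, Complex.exp_eq_exp_iff_exists_int]
  refine exists_congr fun m => ⟨fun h => ?_, fun h => ?_⟩
  · field_simp at h
    linear_combination h
  · rw [h]; field_simp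

lemma ep_intCast_eq_one_iff {p : ℕ} (hp : p ≠ 0) (m : ℤ) : ep p m = 1 ↔ (p : ℤ) ∣ m := by
  rw [← ep_zero p, ep_eq_ep_iff hp]
  refine exists_congr fun k => ?_
  rw [zero_add, mul_comm]
  exact_mod_cast Iff.rfl

lemma Zf_eq_Icc {N : ℕ} : Zf (2 * N + 1) = Finset.Icc (-(N : ℤ)) N := by
  unfold Zf; congr 1 <;> push_cast <;> omega

lemma card_Zf_le (m : ℕ) : (Zf m).card ≤ m := by
  rw [Zf, Int.card_Icc]; omega

lemma Zf_mono {m m' : ℕ} (h : m ≤ m') : Zf m ⊆ Zf m' := by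
  intro a ha; simp only [Zf, Finset.mem_Icc] at ha ⊢; omega

lemma eq_of_mem_Zf_of_dvd_sub {m p : ℕ} (hmp : m ≤ p) {a b : ℤ} (ha : a ∈ Zf m)
    (hb : b ∈ Zf m) (h : (p : ℤ) ∣ a - b) : a = b := by
  simp only [Zf, Finset.mem_Icc] at ha hb
  have := Int.eq_zero_of_abs_lt_dvd h (by rw [abs_lt]; omega)
  omega

lemma sum_Icc_zpow_eq_mul_geom_sum {K : Type*} [DivisionRing K] {z : K} (hz : z ≠ 0) (N : ℕ) :
    ∑ l ∈ Finset.Icc (-(N : ℤ)) N, z ^ l =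
      z ^ (-(N : ℤ)) * ∑ j ∈ Finset.range (2 * N + 1), z ^ j := by
  rw [Finset.mul_sum]
  refine Finset.sum_nbij' (fun l => (l + N).toNat) (fun j => (j : ℤ) - N) ?_ ?_ ?_ ?_ ?_ <;>
    intro l hl <;> simp only [Finset.mem_Icc, Finset.mem_range] at hl ⊢
  · omega
  · omega
  · omega
  · omega
  · rw [← zpow_natCast, ← zpow_add₀ hz]; congr 1; omega

lemma sum_Zf_ep_mul {p : ℕ} (hp : Odd p) (m : ℤ) :
    ∑ l ∈ Zf p, ep p (l * m) = if (p : ℤ) ∣ m then (p : ℂ) else 0 := by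
  obtain ⟨N, rfl⟩ := hp
  have hp0 : 2 * N + 1 ≠ 0 := by omega
  simp only [ep_intCast_mul, Zf_eq_Icc]
  split_ifs with hdvd
  · rw [(ep_intCast_eq_one_iff hp0 m).2 hdvd]
    simp only [one_zpow, Finset.sum_const, Int.card_Icc, nsmul_one]
    norm_cast
    omega
  · have hζ : ep (2 * N + 1) m ≠ 1 := fun h => hdvd ((ep_intCast_eq_one_iff hp0 m).1 h)
    have hζp : ep (2 * N + 1) m ^ (2 * N + 1) = 1 := by
      rw [← zpow_natCast, ← ep_intCast_mul, ← Int.cast_natCast, ← Int.cast_mul,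
        ep_intCast_eq_one_iff hp0]
      exact dvd_mul_right _ _
    rw [sum_Icc_zpow_eq_mul_geom_sum (ep_ne_zero _ _), geom_sum_eq hζ, hζp]
    simp

lemma sum_Zf_ep_mul_sub {p : ℕ} (hp : Odd p) {a b : ℤ} (ha : a ∈ Zf p) (hb : b ∈ Zf p) :
    ∑ l ∈ Zf p, ep p (l * (a - b : ℤ)) = if a = b then (p : ℂ) else 0 := by
  rw [sum_Zf_ep_mul hp]
  congr 1
  exact propext ⟨eq_of_mem_Zf_of_dvd_sub le_rfl ha hb, fun h => h ▸ by simp⟩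

lemma odd_two_mul_sub_one {n : ℕ} (hn : 1 ≤ n) : Odd (2 * n - 1) := ⟨n - 1, by omega⟩

lemma Dk_eq_sum_ep (p : ℕ) (t : ℝ) : Dk p t = (p : ℂ)⁻¹ * ∑ l ∈ Zf p, ep p (l * t) := by
  unfold Dk ep; congr 1; refine Finset.sum_congr rfl fun l _ => ?_; ring_nf

lemma Dk_intCast {p : ℕ} (hp : Odd p) (m : ℤ) : Dk p m = if (p : ℤ) ∣ m then 1 else 0 := by
  have hp0 : (p : ℂ) ≠ 0 := Nat.cast_ne_zero.2 hp.pos.ne'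
  rw [Dk_eq_sum_ep, Complex.ofReal_intCast, sum_Zf_ep_mul hp]
  split_ifs <;> simp [hp0]

lemma Dk_intCast_sub {n p : ℕ} (hp : Odd p) (hnp : n ≤ p) {a b : ℤ} (ha : a ∈ Zf n)
    (hb : b ∈ Zf n) : Dk p (a - b) = if a = b then 1 else 0 := by
  rw [← Int.cast_sub, Dk_intCast hp]
  congr 1
  exact propext ⟨eq_of_mem_Zf_of_dvd_sub hnp ha hb, fun h => h ▸ by simp⟩

lemma sum_Zf_Dk_add_mul_ep {p : ℕ} (hp : Odd p) (t : ℝ) {u : ℤ} (hu : u ∈ Zf p) :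
    ∑ c ∈ Zf p, Dk p (t + c) * ep p (-(u * c)) = ep p (u * t) := by
  have hp0 : (p : ℂ) ≠ 0 := Nat.cast_ne_zero.2 hp.pos.ne'
  have hexpand : ∀ c ∈ Zf p, Dk p (t + c) * ep p (-(u * c)) =
      ∑ l ∈ Zf p, (p : ℂ)⁻¹ * ep p (l * t) * ep p (c * (l - u : ℤ)) := by
    intro c _
    rw [Dk_eq_sum_ep, Finset.mul_sum, Finset.sum_mul]
    refine Finset.sum_congr rfl fun l _ => ?_
    rw [mul_assoc, mul_assoc, ← ep_add, ← ep_add]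
    push_cast; ring_nf
  rw [Finset.sum_congr rfl hexpand, Finset.sum_comm, Finset.sum_eq_single_of_mem u hu]
  · rw [← Finset.mul_sum, sum_Zf_ep_mul_sub hp hu hu, if_pos rfl]
    field_simp
  · intro l hl hlu
    rw [← Finset.mul_sum, sum_Zf_ep_mul_sub hp hl hu, if_neg hlu, mul_zero]

lemma interp_intCast {n : ℕ} (hn : 1 ≤ n) (f : ℤ → ℤ → ℤ → ℂ) {i : ℤ} (hi : i ∈ Zf n)
    (y z : ℝ) :
    interp n f i y z = ∑ j ∈ Zf n, ∑ k ∈ Zf n,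
      f i j k * Dk (2 * n - 1) (y - j) * Dk (2 * n - 1) (z - k) := by
  have hδ := fun i' (hi' : i' ∈ Zf n) =>
    Dk_intCast_sub (odd_two_mul_sub_one hn) (by omega : n ≤ 2 * n - 1) hi hi'
  rw [interp, Finset.sum_eq_single_of_mem i hi]
  · simp only [hδ i hi, if_true, mul_one]
  · intro i' hi' hii'
    simp only [hδ i' hi', if_neg (Ne.symm hii'), mul_zero, zero_mul, Finset.sum_const_zero]

lemma ft2_eq_sum_ep (n : ℕ) (F : ℤ × ℤ → ℂ) (η ζ : ℝ) :
    ft2 n F η ζ = ∑ c ∈ Zf2 (2 * n - 1), F c * ep (2 * n - 1) (-(η * c.1 + ζ * c.2)) := by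
  unfold ft2 ep; refine Finset.sum_congr rfl fun c _ => ?_; ring_nf

lemma ft3_eq_sum_ep (n : ℕ) (f : ℤ → ℤ → ℤ → ℂ) (ξ η ζ : ℝ) :
    ft3 n f ξ η ζ = ∑ i ∈ Zf n, ∑ j ∈ Zf n, ∑ k ∈ Zf n,
      f i j k * ep (2 * n - 1) (-(ξ * i + η * j + ζ * k)) := by
  unfold ft3 ep
  refine Finset.sum_congr rfl fun i _ => Finset.sum_congr rfl fun j _ =>
    Finset.sum_congr rfl fun k _ => ?_
  ring_nf

theorem ft2_proj_dx_eq_ft3 {n : ℕ} (hn : 1 ≤ n) (f : ℤ → ℤ → ℤ → ℂ) (α β : ℝ) {u v : ℤ}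
    (hu : u ∈ Zf (2 * n - 1)) (hv : v ∈ Zf (2 * n - 1)) :
    ft2 n (proj n f (.dx α β)) u v = ft3 n f (-(α * u + β * v)) u v := by
  have hp : Odd (2 * n - 1) := odd_two_mul_sub_one hn
  have hterm : ∀ c ∈ Zf2 (2 * n - 1),
      proj n f (.dx α β) c * ep (2 * n - 1) (-((u : ℝ) * c.1 + (v : ℝ) * c.2)) =
        ∑ i ∈ Zf n, ∑ j ∈ Zf n, ∑ k ∈ Zf n, f i j k *
        ((Dk (2 * n - 1) (α * i - j + c.1) * ep (2 * n - 1) (-(u * c.1))) *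
          (Dk (2 * n - 1) (β * i - k + c.2) * ep (2 * n - 1) (-(v * c.2)))) := by
    intro c hc
    dsimp only [proj]
    rw [if_pos hc, Finset.sum_mul]
    refine Finset.sum_congr rfl fun i hi => ?_
    rw [interp_intCast hn f hi]
    simp only [Finset.sum_mul]
    refine Finset.sum_congr rfl fun j _ => Finset.sum_congr rfl fun k _ => ?_
    rw [show -((u : ℝ) * (c.1 : ℂ) + (v : ℝ) * c.2) = -(u * c.1) + -(v * c.2) by
      push_cast; ring, ep_add]
    ring_nf
  rw [ft2_eq_sum_ep, ft3_eq_sum_ep, Finset.sum_congr rfl hterm, Finset.sum_comm]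
  refine Finset.sum_congr rfl fun i _ => ?_
  rw [Finset.sum_comm]
  refine Finset.sum_congr rfl fun j _ => ?_
  rw [Finset.sum_comm]
  refine Finset.sum_congr rfl fun k _ => ?_
  rw [← Finset.mul_sum, Zf2, Finset.sum_product]
  dsimp only
  rw [← Finset.sum_mul_sum,
    sum_Zf_Dk_add_mul_ep hp _ hu, sum_Zf_Dk_add_mul_ep hp _ hv, ← ep_add]
  congr 2
  push_cast; ring

open Polynomial in
theorem eq_zero_of_sum_mul_zpow_eq_zero {K ι : Type*} [Field K] [Fintype ι] {z : ι → K}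
    (hz : Function.Injective z) (hz0 : ∀ l, z l ≠ 0) {a b : ℤ}
    (hcard : (Finset.Icc a b).card ≤ Fintype.card ι) {c : ℤ → K}
    (h : ∀ l, ∑ i ∈ Finset.Icc a b, c i * z l ^ i = 0) : ∀ i ∈ Finset.Icc a b, c i = 0 := by
  intro i hi
  have hab : a ≤ b := (Finset.mem_Icc.1 hi).1.trans (Finset.mem_Icc.1 hi).2
  set Q : K[X] := ∑ i ∈ Finset.Icc a b, C (c i) * X ^ (i - a).toNat
  have hQ : ∀ l, Q.eval (z l) = 0 := by
    intro l
    have hshift : Q.eval (z l) * z l ^ a = ∑ i ∈ Finset.Icc a b, c i * z l ^ i := by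
      rw [eval_finsetSum, Finset.sum_mul]
      refine Finset.sum_congr rfl fun i hi => ?_
      rw [Finset.mem_Icc] at hi
      rw [eval_mul, eval_C, eval_pow, eval_X, mul_assoc, ← zpow_natCast, ← zpow_add₀ (hz0 l)]
      congr 2; omega
    rw [h l] at hshift
    exact (mul_eq_zero.1 hshift).resolve_right (zpow_ne_zero _ (hz0 l))
  have hdeg : Q.natDegree < Fintype.card ι := by
    refine lt_of_le_of_lt (natDegree_sum_le_of_forall_le _ _ (n := (b - a).toNat) ?_) ?_
    · intro i hi
      rw [Finset.mem_Icc] at hi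
      exact (natDegree_C_mul_X_pow_le _ _).trans (by omega)
    · rw [Int.card_Icc] at hcard; omega
  have hcoeff : Q.coeff (i - a).toNat = c i := by
    rw [finsetSum_coeff, Finset.sum_eq_single_of_mem i hi]
    · rw [coeff_C_mul_X_pow, if_pos rfl]
    · intro i' hi' hne
      rw [Finset.mem_Icc] at hi hi'
      rw [coeff_C_mul_X_pow, if_neg (by omega)]
  rw [← hcoeff, eq_zero_of_natDegree_lt_card_of_eval_eq_zero Q hz hQ hdeg, coeff_zero]

lemma ft3_eq_sum_ft2 {n : ℕ} {h : ℤ → ℤ → ℤ → ℂ} (hh : IsObj n h) (ξ η ζ : ℝ) :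
    ft3 n h ξ η ζ =
      ∑ i ∈ Zf n, ft2 n (fun c => h i c.1 c.2) η ζ * ep (2 * n - 1) (-ξ) ^ i := by
  have hsub : Zf n ×ˢ Zf n ⊆ Zf2 (2 * n - 1) :=
    Finset.product_subset_product (Zf_mono (by omega)) (Zf_mono (by omega))
  rw [ft3_eq_sum_ep]
  refine Finset.sum_congr rfl fun i hi => ?_
  rw [ft2_eq_sum_ep, ← Finset.sum_subset hsub, Finset.sum_product, Finset.sum_mul]
  · refine Finset.sum_congr rfl fun j _ => ?_
    rw [Finset.sum_mul]
    refine Finset.sum_congr rfl fun k _ => ?_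
    rw [mul_assoc, ← ep_intCast_mul, ← ep_add]
    congr 2; ring
  · intro c _ hc
    rw [Finset.mem_product, not_and_or] at hc
    rw [hh i c.1 c.2 (Or.inr hc), zero_mul]

lemma sum_Zf2_ep_mul_sub {p : ℕ} (hp : Odd p) {a b : ℤ × ℤ} (ha : a ∈ Zf2 p)
    (hb : b ∈ Zf2 p) :
    ∑ w ∈ Zf2 p, ep p (w.1 * (a.1 - b.1 : ℤ) + w.2 * (a.2 - b.2 : ℤ)) =
      if a = b then (p : ℂ) ^ 2 else 0 := by
  rw [Zf2, Finset.mem_product] at ha hb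
  simp only [Zf2, Finset.sum_product, ep_add, ← Finset.sum_mul_sum,
    sum_Zf_ep_mul_sub hp ha.1 hb.1, sum_Zf_ep_mul_sub hp ha.2 hb.2, Prod.ext_iff]
  split_ifs <;> simp_all [sq]

theorem sum_ft2_mul_ep {n : ℕ} (hn : 1 ≤ n) (F : ℤ × ℤ → ℂ) {x : ℤ × ℤ}
    (hx : x ∈ Zf2 (2 * n - 1)) :
    ∑ w ∈ Zf2 (2 * n - 1), ft2 n F w.1 w.2 * ep (2 * n - 1) (w.1 * x.1 + w.2 * x.2) =
      ((2 * n - 1 : ℕ) : ℂ) ^ 2 * F x := by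
  have hp := odd_two_mul_sub_one hn
  have hterm : ∀ w ∈ Zf2 (2 * n - 1),
      ft2 n F w.1 w.2 * ep (2 * n - 1) (w.1 * x.1 + w.2 * x.2) = ∑ c ∈ Zf2 (2 * n - 1),
        F c * ep (2 * n - 1) (w.1 * (x.1 - c.1 : ℤ) + w.2 * (x.2 - c.2 : ℤ)) := by
    intro w _
    rw [ft2_eq_sum_ep, Finset.sum_mul]
    refine Finset.sum_congr rfl fun c _ => ?_
    rw [mul_assoc, ← ep_add]
    congr 2; push_cast; ring
  rw [Finset.sum_congr rfl hterm, Finset.sum_comm]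
  simp_rw [← Finset.mul_sum]
  rw [Finset.sum_congr rfl fun c hc => by rw [sum_Zf2_ep_mul_sub hp hx hc]]
  simp only [mul_ite, mul_zero, Finset.sum_ite_eq, if_pos hx]
  ring

lemma zero_mem_Zf2 {m : ℕ} (hm : 1 ≤ m) : (0 : ℤ × ℤ) ∈ Zf2 m := by
  simp only [Zf2, Zf, Prod.fst_zero, Prod.snd_zero, Finset.mem_product, Finset.mem_Icc]
  omega

theorem eq_zero_of_ft2_eq_zero {n : ℕ} (hn : 1 ≤ n) {F : ℤ × ℤ → ℂ}
    (hF : ∀ w ∈ Zf2 (2 * n - 1), w ≠ 0 → ft2 n F w.1 w.2 = 0) {x₀ : ℤ × ℤ}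
    (hx₀ : x₀ ∈ Zf2 (2 * n - 1)) (hFx₀ : F x₀ = 0) :
    ∀ x ∈ Zf2 (2 * n - 1), F x = 0 := by
  have hconst : ∀ x ∈ Zf2 (2 * n - 1), ((2 * n - 1 : ℕ) : ℂ) ^ 2 * F x = ft2 n F 0 0 := by
    intro x hx
    rw [← sum_ft2_mul_ep hn F hx,
      Finset.sum_eq_single_of_mem 0 (zero_mem_Zf2 (by omega)) fun w hw hw0 => by
        rw [hF w hw hw0, zero_mul]]
    simp [ep_zero]
  intro x hx
  have hp : ((2 * n - 1 : ℕ) : ℂ) ^ 2 ≠ 0 := pow_ne_zero _ (Nat.cast_ne_zero.2 (by omega))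
  have := (hconst x hx).trans (hconst x₀ hx₀).symm
  rwa [hFx₀, mul_zero, mul_eq_zero, or_iff_right hp] at this

lemma injective_ep_of_diversity {n : ℕ} {α β : Fin n → ℝ} (hdiv : Diversity n α β)
    (hn : 1 ≤ n) {w : ℤ × ℤ} (hw : w ∈ Zf2 (2 * n - 1)) (hw0 : w ≠ 0) :
    Function.Injective fun l => ep (2 * n - 1) ((α l * w.1 + β l * w.2 : ℝ) : ℂ) := by
  intro l l' hll'
  by_contra hne
  obtain ⟨m, hm⟩ := (ep_eq_ep_iff (by omega) _ _).1 hll'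
  refine hdiv.2 w hw hw0 l l' hne ⟨m, ?_⟩
  have hm' : α l * w.1 + β l * w.2 = α l' * w.1 + β l' * w.2 + m * (2 * n - 1 : ℕ) := by
    exact_mod_cast hm
  linarith

lemma ft2_slice_eq_zero_of_proj_dx_eq_zero {n : ℕ} (hn : 1 ≤ n) {h : ℤ → ℤ → ℤ → ℂ}
    (hh : IsObj n h) {α β : Fin n → ℝ} (hdiv : Diversity n α β)
    (hproj : ∀ l, ∀ c ∈ Zf2 (2 * n - 1), proj n h (.dx (α l) (β l)) c = 0)
    {w : ℤ × ℤ} (hw : w ∈ Zf2 (2 * n - 1)) (hw0 : w ≠ 0) :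
    ∀ i ∈ Zf n, ft2 n (fun c => h i c.1 c.2) w.1 w.2 = 0 := by
  have hw' := Finset.mem_product.1 hw
  refine eq_zero_of_sum_mul_zpow_eq_zero (injective_ep_of_diversity hdiv hn hw hw0)
    (fun l => ep_ne_zero _ _) ((card_Zf_le n).trans_eq (Fintype.card_fin n).symm) fun l => ?_
  have hslice := ft2_proj_dx_eq_ft3 hn h (α l) (β l) hw'.1 hw'.2
  rw [ft2_eq_sum_ep, Finset.sum_eq_zero fun c hc => by rw [hproj l c hc, zero_mul],
    ft3_eq_sum_ft2 hh, Complex.ofReal_neg, neg_neg] at hslice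
  exact hslice.symm

theorem eq_zero_of_proj_dx_eq_zero {n : ℕ} (hn : 2 ≤ n) {h : ℤ → ℤ → ℤ → ℂ}
    (hh : IsObj n h) {α β : Fin n → ℝ} (hdiv : Diversity n α β)
    (hproj : ∀ l, ∀ c ∈ Zf2 (2 * n - 1), proj n h (.dx (α l) (β l)) c = 0) :
    ∀ i j k, h i j k = 0 := by
  intro i j k
  by_cases hijk : i ∈ Zf n ∧ j ∈ Zf n ∧ k ∈ Zf n
  swap
  · exact hh i j k (by tauto)
  obtain ⟨hi, hj, hk⟩ := hijk
  -- Since `n < 2n - 1`, every slice vanishes somewhere on `Z_{2n-1}²`, e.g. at `(n - 1, 0)`.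
  have hx₀ : ((n : ℤ) - 1, (0 : ℤ)) ∈ Zf2 (2 * n - 1) := by
    simp only [Zf2, Zf, Finset.mem_product, Finset.mem_Icc]; omega
  have hx₀' : (n : ℤ) - 1 ∉ Zf n := by
    simp only [Zf, Finset.mem_Icc]; omega
  exact eq_zero_of_ft2_eq_zero (by omega) (F := fun c => h i c.1 c.2)
    (fun w hw hw0 => ft2_slice_eq_zero_of_proj_dx_eq_zero (by omega) hh hdiv hproj hw hw0 i hi)
    hx₀ (hh i _ 0 (Or.inr (Or.inl hx₀'))) (j, k)
    (Finset.mem_product.2 ⟨Zf_mono (by omega) hj, Zf_mono (by omega) hk⟩)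

lemma interp_sub_smul (n : ℕ) (f g : ℤ → ℤ → ℤ → ℂ) (e : ℂ) (x y z : ℝ) :
    interp n (g - e • f) x y z = interp n g x y z - e * interp n f x y z := by
  simp only [interp, Finset.mul_sum, ← Finset.sum_sub_distrib, Pi.sub_apply, Pi.smul_apply,
    smul_eq_mul]
  refine Finset.sum_congr rfl fun i _ => Finset.sum_congr rfl fun j _ =>
    Finset.sum_congr rfl fun k _ => ?_
  ring

lemma proj_sub_smul (n : ℕ) (f g : ℤ → ℤ → ℤ → ℂ) (e : ℂ) (t : Dir) (c : ℤ × ℤ) :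
    proj n (g - e • f) t c = proj n g t c - e * proj n f t c := by
  cases t <;>
  · dsimp only [proj]
    split_ifs
    · simp only [interp_sub_smul, Finset.sum_sub_distrib, Finset.mul_sum]
    · ring

lemma interp_swap_xy (n : ℕ) (h : ℤ → ℤ → ℤ → ℂ) (x y z : ℝ) :
    interp n (fun i j k => h j i k) x y z = interp n h y x z := by
  rw [interp, interp, Finset.sum_comm]
  refine Finset.sum_congr rfl fun i _ => Finset.sum_congr rfl fun j _ =>
    Finset.sum_congr rfl fun k _ => ?_
  ring

lemma interp_rotate (n : ℕ) (h : ℤ → ℤ → ℤ → ℂ) (x y z : ℝ) :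
    interp n (fun i j k => h j k i) x y z = interp n h y z x := by
  rw [interp, interp, Finset.sum_comm]
  refine Finset.sum_congr rfl fun i _ => ?_
  rw [Finset.sum_comm]
  refine Finset.sum_congr rfl fun j _ => Finset.sum_congr rfl fun k _ => ?_
  ring

lemma proj_dy_eq_proj_dx (n : ℕ) (h : ℤ → ℤ → ℤ → ℂ) (α β : ℝ) :
    proj n h (.dy α β) = proj n (fun i j k => h j i k) (.dx α β) := by
  funext c
  simp only [proj, interp_swap_xy]

lemma proj_dz_eq_proj_dx (n : ℕ) (h : ℤ → ℤ → ℤ → ℂ) (α β : ℝ) :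
    proj n h (.dz α β) = proj n (fun i j k => h j k i) (.dx α β) := by
  funext c
  simp only [proj, interp_rotate]

theorem projection_tomography_unique_general
    (n : ℕ) (hn3 : 3 ≤ n)
    (f g : ℤ → ℤ → ℤ → ℂ) (hf : IsObj n f) (hg : IsObj n g)
    (α β : Fin n → ℝ) (hdiv : Diversity n α β)
    (θ₀ : ℝ)
    (hT : (∀ l : Fin n, ∀ m ∈ Zf2 (2 * n - 1),
            proj n g (Dir.dx (α l) (β l)) m
              = Complex.exp (Complex.I * (θ₀ : ℂ)) * proj n f (Dir.dx (α l) (β l)) m) ∨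
          (∀ l : Fin n, ∀ m ∈ Zf2 (2 * n - 1),
            proj n g (Dir.dy (α l) (β l)) m
              = Complex.exp (Complex.I * (θ₀ : ℂ)) * proj n f (Dir.dy (α l) (β l)) m) ∨
          (∀ l : Fin n, ∀ m ∈ Zf2 (2 * n - 1),
            proj n g (Dir.dz (α l) (β l)) m
              = Complex.exp (Complex.I * (θ₀ : ℂ)) * proj n f (Dir.dz (α l) (β l)) m)) :
    ∀ i j k : ℤ, g i j k = Complex.exp (Complex.I * (θ₀ : ℂ)) * f i j k := by
  set e := Complex.exp (Complex.I * (θ₀ : ℂ))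
  have hn : 2 ≤ n := by omega
  have hh : IsObj n (g - e • f) := fun i j k hijk => by
    simp [hf i j k hijk, hg i j k hijk]
  suffices hzero : ∀ i j k, (g - e • f) i j k = 0 by
    intro i j k
    simpa [sub_eq_zero] using hzero i j k
  rcases hT with hT | hT | hT
  · exact eq_zero_of_proj_dx_eq_zero hn hh hdiv fun l c hc => by
      rw [proj_sub_smul, hT l c hc, sub_self]
  · intro i j k
    refine eq_zero_of_proj_dx_eq_zero hn (h := fun i j k => (g - e • f) j i k)
      (fun i j k hijk => hh j i k (by tauto)) hdiv (fun l c hc => ?_) j i k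
    rw [← proj_dy_eq_proj_dx, proj_sub_smul, hT l c hc, sub_self]
  · intro i j k
    refine eq_zero_of_proj_dx_eq_zero hn (h := fun i j k => (g - e • f) j k i)
      (fun i j k hijk => hh j k i (by tauto)) hdiv (fun l c hc => ?_) k i j
    rw [← proj_dz_eq_proj_dx, proj_sub_smul, hT l c hc, sub_self]

/-- Uniqueness for discrete projection tomography. -/
theorem projection_tomography_unique
    (n : ℕ) (hn : Odd n) (hn3 : 3 ≤ n)
    (f g : ℤ → ℤ → ℤ → ℂ) (hf : IsObj n f) (hg : IsObj n g)
    (α β : Fin n → ℝ) (hdiv : Diversity n α β)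
    (θ₀ : ℝ)
    (hT : (∀ l : Fin n, ∀ m ∈ Zf2 (2 * n - 1),
            proj n g (Dir.dx (α l) (β l)) m
              = Complex.exp (Complex.I * (θ₀ : ℂ)) * proj n f (Dir.dx (α l) (β l)) m) ∨
          (∀ l : Fin n, ∀ m ∈ Zf2 (2 * n - 1),
            proj n g (Dir.dy (α l) (β l)) m
              = Complex.exp (Complex.I * (θ₀ : ℂ)) * proj n f (Dir.dy (α l) (β l)) m) ∨
          (∀ l : Fin n, ∀ m ∈ Zf2 (2 * n - 1),
            proj n g (Dir.dz (α l) (β l)) m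
              = Complex.exp (Complex.I * (θ₀ : ℂ)) * proj n f (Dir.dz (α l) (β l)) m)) :
    ∀ i j k : ℤ, g i j k = Complex.exp (Complex.I * (θ₀ : ℂ)) * f i j k :=
  projection_tomography_unique_general n hn3 f g hf hg α β hdiv θ₀ hT

end Tomo3D
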